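/- arXiv:2501.06588 — 2 statements merged into one kernel-verified Lean document; each statement's English description precedes it below -/
import Mathlib

section
/- For any points a, b, c in a metric space with distance function dist, any positive integer z, and any β > 0, we have dist(a,b)^z ≤ (1+β)^(z-1) · dist(a,c)^z + (1 + 1/β)^(z-1) · dist(b,c)^z. -/
/-- Triangle inequality for powers: for points `a b c` in a metric space,
a positive integer `z`, and `β > 0`,
`dist a b ^ z ≤ (1+β)^(z-1) * dist a c ^ z + (1 + 1/β)^(z-1) * dist b c ^ z`. -/
theorem triangle_inequality_for_powers {X : Type*} [MetricSpace X]
    (a b c : X) (z : ℕ) (hz : 1 ≤ z) (β : ℝ) (hβ : 0 < β) :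
    dist a b ^ z ≤ (1 + β) ^ (z - 1) * dist a c ^ z
      + (1 + 1 / β) ^ (z - 1) * dist b c ^ z := by
  obtain ⟨k, rfl⟩ : ∃ k, z = k + 1 := ⟨z - 1, (Nat.succ_pred_eq_of_pos hz).symm⟩
  simp only [Nat.add_sub_cancel]
  set x := dist a c with hxdef
  set y := dist b c with hydef
  have hx : 0 ≤ x := dist_nonneg
  have hy : 0 ≤ y := dist_nonneg
  have h1 : dist a b ≤ x + y := by
    calc dist a b ≤ dist a c + dist c b := dist_triangle a c b
    _ = x + y := by rw [dist_comm c b]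
  have hβ1 : 0 < 1 + β := by linarith
  have hlam : (0:ℝ) ≤ 1 / (1 + β) := by positivity
  have hmu : (0:ℝ) ≤ β / (1 + β) := by positivity
  have hsum : 1 / (1 + β) + β / (1 + β) = 1 := by field_simp
  have hc := (convexOn_pow (k + 1)).2 (show ((1 + β) * x) ∈ Set.Ici (0:ℝ) by
      simp [Set.mem_Ici]; positivity)
    (show ((1 + β) / β * y) ∈ Set.Ici (0:ℝ) by simp [Set.mem_Ici]; positivity)
    hlam hmu hsum
  have hpt : (1 / (1 + β)) • ((1 + β) * x) + (β / (1 + β)) • ((1 + β) / β * y)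
      = x + y := by
    field_simp
    rw [smul_eq_mul, smul_eq_mul]
    field_simp
  rw [hpt] at hc
  simp only [smul_eq_mul] at hc
  have e1 : 1 / (1 + β) * ((1 + β) * x) ^ (k + 1) = (1 + β) ^ k * x ^ (k + 1) := by
    rw [mul_pow, pow_succ]
    field_simp
  have e2 : β / (1 + β) * ((1 + β) / β * y) ^ (k + 1)
      = (1 + 1 / β) ^ k * y ^ (k + 1) := by
    have : (1 + 1 / β) = (1 + β) / β := by field_simp; ring
    rw [this, mul_pow, pow_succ, div_pow]
    field_simp
  rw [e1, e2] at hc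
  calc dist a b ^ (k + 1) ≤ (x + y) ^ (k + 1) :=
        pow_le_pow_left₀ dist_nonneg h1 _
    _ ≤ _ := hc
end

section
/- There exist two families F and G of real-valued functions on the positive integers such that the range spaces {{x : f(x) ≥ t} : f ∈ F, t ∈ ℝ} and {{x : g(x) ≥ t} : g ∈ G, t ∈ ℝ} each have VC dimension 1, yet the range space {{x : f(x) − g(x) ≥ t} : f ∈ F, g ∈ G, t ∈ ℝ} shatters every finite subset of the positive integers (i.e., has infinite VC dimension). -/
/-- A collection of ranges `R` shatters `Y` if every subset of `Y` can be cut
out by a range. -/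
def RangesShatter {α : Type*} (R : Set (Set α)) (Y : Set α) : Prop :=
  ∀ Z ⊆ Y, ∃ r ∈ R, Y ∩ r = Z

/-- The threshold range space of a family of real-valued functions. -/
def ThresholdRanges {α : Type*} (F : Set (α → ℝ)) : Set (Set α) :=
  {s | ∃ f ∈ F, ∃ t : ℝ, s = {x | t ≤ f x}}

/-- The threshold range space of pointwise differences `f − g`. -/
def DiffThresholdRanges {α : Type*} (F G : Set (α → ℝ)) : Set (Set α) :=
  {s | ∃ f ∈ F, ∃ g ∈ G, ∃ t : ℝ, s = {x | t ≤ f x - g x}}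

/-- If every function in `F` is monotone, no 2-point set is shattered. -/
lemma mono_card_le {F : Set (ℕ+ → ℝ)}
    (hF : ∀ f ∈ F, Monotone f) (Y : Finset ℕ+)
    (h : RangesShatter (ThresholdRanges F) (↑Y : Set ℕ+)) : Y.card ≤ 1 := by
  by_contra hc
  push_neg at hc
  obtain ⟨x, hx, y, hy, hxy⟩ := Finset.one_lt_card.mp hc
  wlog hlt : x < y generalizing x y
  · exact this y hy x hx hxy.symm (lt_of_le_of_ne (not_lt.mp hlt) hxy.symm)
  obtain ⟨r, ⟨f, hf, t, rfl⟩, hr⟩ := h {x} (by simp [hx])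
  have hxr : x ∈ ({x} : Set ℕ+) := rfl
  rw [← hr] at hxr
  have hyr : y ∈ (↑Y : Set ℕ+) ∩ {z | t ≤ f z} :=
    ⟨hy, le_trans hxr.2 (hF f hf hlt.le)⟩
  rw [hr] at hyr
  exact hxy (Set.eq_of_mem_singleton hyr).symm

/-- There exist families `F`, `G` of functions on the positive integers whose
threshold range spaces have VC dimension at most 1 (no 2-point set is
shattered), yet the range space of differences `F − G` shatters every finite
subset of the positive integers. -/
theorem vc_dim_difference_unbounded :
    ∃ F G : Set (ℕ+ → ℝ),
      (∀ Y : Finset ℕ+, RangesShatter (ThresholdRanges F) (↑Y : Set ℕ+) →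
        Y.card ≤ 1) ∧
      (∀ Y : Finset ℕ+, RangesShatter (ThresholdRanges G) (↑Y : Set ℕ+) →
        Y.card ≤ 1) ∧
      (∀ Y : Finset ℕ+, RangesShatter (DiffThresholdRanges F G)
        (↑Y : Set ℕ+)) := by
  refine ⟨Set.range (fun S : Set ℕ+ => fun x : ℕ+ =>
      2 * (x : ℝ) + S.indicator 1 x),
    {fun x : ℕ+ => 2 * (x : ℝ)}, ?_, ?_, ?_⟩
  · refine fun Y h => mono_card_le ?_ Y h
    rintro f ⟨S, rfl⟩
    intro a b hab
    rcases eq_or_lt_of_le hab with rfl | hab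
    · rfl
    · have h1 : (a : ℝ) + 1 ≤ (b : ℝ) := by
        have : (a:ℕ) + 1 ≤ (b:ℕ) := Nat.succ_le_of_lt (by exact_mod_cast hab)
        exact_mod_cast this
      classical
      dsimp only
      by_cases ha : a ∈ S <;> by_cases hb : b ∈ S <;>
        simp [Set.indicator, ha, hb] <;> first | exact le_of_lt hab | linarith
  · refine fun Y h => mono_card_le ?_ Y h
    rintro f rfl
    intro a b hab
    have : (a : ℝ) ≤ (b : ℝ) := by exact_mod_cast hab
    simp only []
    linarith
  · intro Y Z hZ
    refine ⟨{x | (1:ℝ) ≤ (2 * (x : ℝ) + Z.indicator 1 x) - 2 * (x:ℝ)},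
      ⟨_, ⟨Z, rfl⟩, _, rfl, 1, rfl⟩, ?_⟩
    ext x
    simp only [Set.mem_inter_iff, Set.mem_setOf_eq, Finset.coe_sort_coe]
    constructor
    · rintro ⟨hxY, hx⟩
      by_contra hxZ
      classical
      simp [Set.indicator, hxZ] at hx
      linarith
    · intro hxZ
      refine ⟨hZ hxZ, ?_⟩
      classical
      simp [Set.indicator, hxZ]
end
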